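/- For every constant C > 0, the sequence of functions (z,c,a) ↦ d^{-n}·h_{c,a,v}(P_{c,a}^n(z)) converges uniformly on the set {(z,c,a) ∈ K^d : max{|a|_v, |c|_v} ≤ C}. The limit g_{c,a,v}(z) := lim_{n→∞} d^{-n}·h_{c,a,v}(P_{c,a}^n(z)) is a continuous, non-negative function on K^d (for the topology induced by |·|_v), it satisfies the functional equation g_{c,a,v}(P_{c,a}(z)) = d·g_{c,a,v}(z), and g_{c,a,v}(z) = 0 if and only if the forward orbit (P_{c,a}^n(z))_{n≥0} is bounded, i.e. sup_n |P_{c,a}^n(z)|_v < ∞. -/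

import Mathlib

/-
Write `d = n + 2` and `t = |d|^{1/(d-1)}`. By the ultrametric inequality the leading term of
`P = P_{c,a}` dominates outside the disc of radius `C̃ = C̃_v(c,a)`: there `|P z| = |z|^d / |d|`,
while `|P z| ≤ C̃^d / |d|` inside. Hence `h (P z) - d h z` is bounded by a constant depending only
on `log C̃` and `log t`, so `d^{-m} h (P^m z)` is Cauchy at a geometric rate, uniformly where `C̃`
is bounded, i.e. where `|a|` and `|c|` are. A locally uniform limit of continuous functions is
continuous, and the functional equation is a shift of the sequence. Outside the disc,
`h - log t` is multiplied exactly by `d` under `P`, so `g = log (|z| / t) > 0` there; an orbit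
that leaves the disc thus has `g > 0`, while along a bounded orbit `h` stays bounded and `g = 0`.
-/

open Filter

noncomputable section

variable {K : Type*} [Field K]

/-- Elementary symmetric polynomial of degree `k` evaluated at `c = (c_1, …, c_{d-2})`. -/
def esymmK {n : ℕ} (c : Fin n → K) (k : ℕ) : K :=
  ∑ s ∈ Finset.powersetCard k (Finset.univ : Finset (Fin n)), ∏ i ∈ s, c i

/-- The polynomial `P_{c,a}` of degree `d = n + 2`:
`P_{c,a}(z) = z^d/d + ∑_{j=2}^{d-1} (-1)^{d-j} σ_{d-j}(c) z^j / j + a^d`. -/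
def Pca {n : ℕ} (c : Fin n → K) (a z : K) : K :=
  z ^ (n + 2) / ((n + 2 : ℕ) : K)
    + ∑ j ∈ Finset.Icc 2 (n + 1),
        ((-1 : K) ^ (n + 2 - j) * esymmK c (n + 2 - j) * z ^ j) / ((j : ℕ) : K)
    + a ^ (n + 2)

/-- The critical points `c_0 = 0, c_1, …, c_{d-2}` of `P_{c,a}`. -/
def crit {n : ℕ} (c : Fin n → K) (i : Fin (n + 1)) : K :=
  if h : (i : ℕ) = 0 then 0 else c ⟨(i : ℕ) - 1, by have := i.isLt; omega⟩

/-- `|c|_v = max_{1 ≤ i ≤ d-2} |c_i|_v` (with value `0` when there are no `c_i`'s). -/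
def cnorm {n : ℕ} (v : AbsoluteValue K ℝ) (c : Fin n → K) : ℝ :=
  Finset.fold max 0 (fun i => v (c i)) (Finset.univ : Finset (Fin n))

/-- `α_v = max_{1 ≤ j ≤ d} |j|_v⁻¹`. -/
def alphaV (v : AbsoluteValue K ℝ) (d : ℕ) : ℝ :=
  Finset.fold max 0 (fun j : ℕ => (v ((j : ℕ) : K))⁻¹) (Finset.Icc 1 d)

/-- `C_v(c,a) = max{ |d|_v^{1/(d-1)}, |d|_v^{1/d}·|a|_v,
max_{2≤j≤d-1} (|σ_{d-j}(c)|_v · |d/j|_v)^{1/(d-j)} }`, with `d = n + 2`. -/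
def Cv {n : ℕ} (v : AbsoluteValue K ℝ) (c : Fin n → K) (a : K) : ℝ :=
  max ((v (((n + 2 : ℕ) : K))) ^ ((1 : ℝ) / ((n : ℝ) + 1)))
    (max ((v (((n + 2 : ℕ) : K))) ^ ((1 : ℝ) / ((n : ℝ) + 2)) * v a)
      (Finset.fold max 0
        (fun j : ℕ =>
          (v (esymmK c (n + 2 - j)) * v (((n + 2 : ℕ) : K) / ((j : ℕ) : K)))
            ^ ((1 : ℝ) / ((n + 2 - j : ℕ) : ℝ)))
        (Finset.Icc 2 (n + 1))))

/-- `C̃_v(c,a) = max{ |a|_v, |c|_v, C_v(c,a) }`. -/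
def Ctilde {n : ℕ} (v : AbsoluteValue K ℝ) (c : Fin n → K) (a : K) : ℝ :=
  max (v a) (max (cnorm v c) (Cv v c a))

/-- `h_{c,a,v}(z) = log max{ C̃_v(c,a), |z|_v }`. -/
def hca {n : ℕ} (v : AbsoluteValue K ℝ) (c : Fin n → K) (a : K) (z : K) : ℝ :=
  Real.log (max (Ctilde v c a) (v z))

/-- `log⁺ = max{0, log}`. -/
def logPlus (x : ℝ) : ℝ := max 0 (Real.log x)

/-- `U_i(ε, C) = {(c,a) : max{|c|_v,|a|_v} ≥ C and |P_{c,a}(c_i)|_v ≥ ε·max{|c|_v,|a|_v}^d}`. -/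
def Uset {n : ℕ} (v : AbsoluteValue K ℝ) (i : Fin (n + 1)) (ε C : ℝ) :
    Set ((Fin n → K) × K) :=
  {p | C ≤ max (cnorm v p.1) (v p.2) ∧
       ε * max (cnorm v p.1) (v p.2) ^ (n + 2) ≤ v (Pca p.1 p.2 (crit p.1 i))}

open Topology

namespace IsNonarchimedean

variable {α β : Type*} [AddCommMonoid α] {f : α → ℝ} {s : Finset β} {l : β → α} {B : ℝ}

lemma apply_sum_le_of_forall_le (hf : IsNonarchimedean f) (hf0 : f 0 = 0) (hB : 0 ≤ B)
    (h : ∀ i ∈ s, f (l i) ≤ B) : f (∑ i ∈ s, l i) ≤ B := by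
  rcases s.eq_empty_or_nonempty with rfl | hs
  · simpa [hf0] using hB
  · exact (hf.apply_sum_le_sup hs).trans (Finset.sup'_le hs _ h)

lemma apply_sum_lt_of_forall_lt (hf : IsNonarchimedean f) (hf0 : f 0 = 0) (hB : 0 < B)
    (h : ∀ i ∈ s, f (l i) < B) : f (∑ i ∈ s, l i) < B := by
  rcases s.eq_empty_or_nonempty with rfl | hs
  · simpa [hf0] using hB
  · exact (hf.apply_sum_le_sup hs).trans_lt ((Finset.sup'_lt_iff hs).2 h)

end IsNonarchimedean

lemma Real.le_pow_of_rpow_one_div_le {x y : ℝ} (hx : 0 ≤ x) (hy : 0 ≤ y) {k : ℕ} (hk : k ≠ 0)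
    (h : x ^ (1 / (k : ℝ)) ≤ y) : x ≤ y ^ k := by
  rw [one_div, Real.rpow_inv_le_iff_of_pos hx hy (by positivity), Real.rpow_natCast] at h
  exact h

lemma Real.rpow_one_div_le_of_le_pow {x y : ℝ} (hx : 0 ≤ x) (hy : 0 ≤ y) {k : ℕ} (hk : k ≠ 0)
    (h : x ≤ y ^ k) : x ^ (1 / (k : ℝ)) ≤ y := by
  rwa [one_div, Real.rpow_inv_le_iff_of_pos hx hy (by positivity), Real.rpow_natCast]

lemma Real.rpow_one_div_pow {x : ℝ} (hx : 0 ≤ x) {k : ℕ} (hk : k ≠ 0) :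
    (x ^ ((1 : ℝ) / (k : ℝ))) ^ k = x := by
  rw [one_div, Real.rpow_inv_natCast_pow hx hk]

lemma cnorm_nonneg (v : AbsoluteValue K ℝ) {n : ℕ} (c : Fin n → K) : 0 ≤ cnorm v c :=
  (Finset.le_fold_max _).2 (Or.inl le_rfl)

lemma abv_le_cnorm (v : AbsoluteValue K ℝ) {n : ℕ} (c : Fin n → K) (i : Fin n) :
    v (c i) ≤ cnorm v c :=
  (Finset.le_fold_max _).2 (Or.inr ⟨i, Finset.mem_univ i, le_rfl⟩)

lemma abv_esymmK_le {v : AbsoluteValue K ℝ} (hv : IsNonarchimedean v) {n : ℕ} (c : Fin n → K)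
    (k : ℕ) : v (esymmK c k) ≤ cnorm v c ^ k := by
  refine hv.apply_sum_le_of_forall_le v.map_zero (pow_nonneg (cnorm_nonneg v c) k) fun s hs => ?_
  rw [map_prod, ← (Finset.mem_powersetCard.1 hs).2, ← Finset.prod_const]
  exact Finset.prod_le_prod (fun i _ => v.nonneg _) fun i _ => abv_le_cnorm v c i

/-- The radius `|d|^{1/(d-1)}` at which `r ↦ r^d / |d|` has its fixed point; it is the first
entry of `Cv`. -/
def fixedRadius (v : AbsoluteValue K ℝ) (n : ℕ) : ℝ :=
  v ((n + 2 : ℕ) : K) ^ ((1 : ℝ) / ((n : ℝ) + 1))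

section Ctilde

variable (v : AbsoluteValue K ℝ) {n : ℕ} (c : Fin n → K) (a : K)

lemma Cv_le_Ctilde : Cv v c a ≤ Ctilde v c a :=
  (le_max_right _ _).trans (le_max_right _ _)

lemma fixedRadius_le_Ctilde : fixedRadius v n ≤ Ctilde v c a :=
  (le_max_left _ _).trans (Cv_le_Ctilde v c a)

lemma Ctilde_nonneg : 0 ≤ Ctilde v c a :=
  (v.nonneg a).trans (le_max_left _ _)

lemma fixedRadius_pow : fixedRadius v n ^ (n + 1) = v ((n + 2 : ℕ) : K) := by
  rw [fixedRadius, show (n : ℝ) + 1 = ((n + 1 : ℕ) : ℝ) by push_cast; ring]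
  exact Real.rpow_one_div_pow (v.nonneg _) (by omega)

lemma abv_pow_mul_le_Ctilde_pow :
    v a ^ (n + 2) * v ((n + 2 : ℕ) : K) ≤ Ctilde v c a ^ (n + 2) := by
  have h : v ((n + 2 : ℕ) : K) ^ ((1 : ℝ) / ((n : ℝ) + 2)) * v a ≤ Ctilde v c a :=
    ((le_max_left _ _).trans (le_max_right _ _)).trans (Cv_le_Ctilde v c a)
  rw [show (n : ℝ) + 2 = ((n + 2 : ℕ) : ℝ) by push_cast; ring] at h
  calc v a ^ (n + 2) * v ((n + 2 : ℕ) : K)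
      = (v ((n + 2 : ℕ) : K) ^ ((1 : ℝ) / ((n + 2 : ℕ) : ℝ)) * v a) ^ (n + 2) := by
        rw [mul_pow, Real.rpow_one_div_pow (v.nonneg _) (by omega), mul_comm]
    _ ≤ Ctilde v c a ^ (n + 2) := pow_le_pow_left₀ (by positivity) h _

lemma abv_esymmK_mul_le_Ctilde_pow {j : ℕ} (hj : j ∈ Finset.Icc 2 (n + 1)) :
    v (esymmK c (n + 2 - j)) * v ((n + 2 : ℕ) : K) / v (j : K) ≤ Ctilde v c a ^ (n + 2 - j) := by
  have hk : n + 2 - j ≠ 0 := by grind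
  have h : (v (esymmK c (n + 2 - j)) * v (((n + 2 : ℕ) : K) / ((j : ℕ) : K)))
      ^ ((1 : ℝ) / ((n + 2 - j : ℕ) : ℝ)) ≤ Ctilde v c a :=
    ((Finset.le_fold_max _).2 (Or.inr ⟨j, hj, le_rfl⟩)).trans
      (((le_max_right _ _).trans (le_max_right _ _)).trans (Cv_le_Ctilde v c a))
  rw [map_div₀, ← mul_div_assoc] at h
  exact Real.le_pow_of_rpow_one_div_le (by positivity) (Ctilde_nonneg v c a) hk h

lemma log_abv_natCast_eq :
    Real.log (v ((n + 2 : ℕ) : K)) = (n + 1) * Real.log (fixedRadius v n) := by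
  rw [← fixedRadius_pow, Real.log_pow]
  push_cast
  ring

variable [CharZero K]

lemma abv_natCast_pos {j : ℕ} (hj : j ≠ 0) : 0 < v (j : K) :=
  v.pos (Nat.cast_ne_zero.2 hj)

lemma fixedRadius_pos : 0 < fixedRadius v n :=
  Real.rpow_pos_of_pos (abv_natCast_pos v (by omega)) _

lemma Ctilde_pos : 0 < Ctilde v c a :=
  (fixedRadius_pos v).trans_le (fixedRadius_le_Ctilde v c a)

end Ctilde

section Estimates

variable [CharZero K] {v : AbsoluteValue K ℝ} {n : ℕ} (c : Fin n → K) (a : K)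

lemma abv_Pca_term_le (z : K) {j : ℕ} (hj : j ∈ Finset.Icc 2 (n + 1)) :
    v (((-1 : K) ^ (n + 2 - j) * esymmK c (n + 2 - j) * z ^ j) / ((j : ℕ) : K))
      ≤ Ctilde v c a ^ (n + 2 - j) * v z ^ j / v ((n + 2 : ℕ) : K) := by
  have hd : 0 < v ((n + 2 : ℕ) : K) := abv_natCast_pos v (by omega)
  calc v (((-1 : K) ^ (n + 2 - j) * esymmK c (n + 2 - j) * z ^ j) / ((j : ℕ) : K))
      = v (esymmK c (n + 2 - j)) * v ((n + 2 : ℕ) : K) / v (j : K) * v z ^ j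
          / v ((n + 2 : ℕ) : K) := by
        simp only [map_div₀, map_mul, map_pow, map_neg_eq_map, map_one, one_pow, one_mul]
        field_simp
    _ ≤ Ctilde v c a ^ (n + 2 - j) * v z ^ j / v ((n + 2 : ℕ) : K) := by
        gcongr
        exact abv_esymmK_mul_le_Ctilde_pow v c a hj

lemma abv_pow_le_Ctilde_pow_div :
    v (a ^ (n + 2)) ≤ Ctilde v c a ^ (n + 2) / v ((n + 2 : ℕ) : K) := by
  rw [map_pow, le_div_iff₀ (abv_natCast_pos v (by omega))]
  exact abv_pow_mul_le_Ctilde_pow v c a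

variable (hv : IsNonarchimedean v)
include hv

lemma abv_Pca_le_of_abv_le_Ctilde {z : K} (hz : v z ≤ Ctilde v c a) :
    v (Pca c a z) ≤ Ctilde v c a ^ (n + 2) / v ((n + 2 : ℕ) : K) := by
  have hD := Ctilde_nonneg v c a
  have hlead : v (z ^ (n + 2) / ((n + 2 : ℕ) : K))
      ≤ Ctilde v c a ^ (n + 2) / v ((n + 2 : ℕ) : K) := by
    rw [map_div₀, map_pow]
    gcongr
  refine (hv _ _).trans (max_le ((hv _ _).trans (max_le hlead ?_))
    (abv_pow_le_Ctilde_pow_div c a))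
  refine hv.apply_sum_le_of_forall_le v.map_zero (by positivity) fun j hj =>
    (abv_Pca_term_le c a z hj).trans ?_
  gcongr
  calc Ctilde v c a ^ (n + 2 - j) * v z ^ j
      ≤ Ctilde v c a ^ (n + 2 - j) * Ctilde v c a ^ j := by gcongr
    _ = Ctilde v c a ^ (n + 2) := pow_sub_mul_pow _ (by grind)

lemma abv_Pca_of_Ctilde_lt {z : K} (hz : Ctilde v c a < v z) :
    v (Pca c a z) = v z ^ (n + 2) / v ((n + 2 : ℕ) : K) := by
  have hD := Ctilde_nonneg v c a
  have hd : 0 < v ((n + 2 : ℕ) : K) := abv_natCast_pos v (by omega)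
  have hlead : v (z ^ (n + 2) / ((n + 2 : ℕ) : K)) = v z ^ (n + 2) / v ((n + 2 : ℕ) : K) := by
    rw [map_div₀, map_pow]
  have hz0 : 0 < v z := hD.trans_lt hz
  have hconst : v (a ^ (n + 2)) < v z ^ (n + 2) / v ((n + 2 : ℕ) : K) :=
    (abv_pow_le_Ctilde_pow_div c a).trans_lt (by gcongr)
  have hsum : v (∑ j ∈ Finset.Icc 2 (n + 1),
      ((-1 : K) ^ (n + 2 - j) * esymmK c (n + 2 - j) * z ^ j) / ((j : ℕ) : K))
      < v (z ^ (n + 2) / ((n + 2 : ℕ) : K)) := by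
    rw [hlead]
    refine hv.apply_sum_lt_of_forall_lt v.map_zero (by positivity) fun j hj =>
      (abv_Pca_term_le c a z hj).trans_lt ?_
    gcongr
    calc Ctilde v c a ^ (n + 2 - j) * v z ^ j
        < v z ^ (n + 2 - j) * v z ^ j := by
          gcongr
          grind
      _ = v z ^ (n + 2) := pow_sub_mul_pow _ (by grind)
  have hlead_sum := hv.add_eq_left_of_lt hsum
  rw [Pca, hv.add_eq_left_of_lt (hlead_sum ▸ hlead ▸ hconst), hlead_sum, hlead]

end Estimates

section Dynamics

variable [CharZero K] {v : AbsoluteValue K ℝ} (hv : IsNonarchimedean v) {n : ℕ} (c : Fin n → K)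
  (a : K)

lemma Ctilde_le_Ctilde_pow_div : Ctilde v c a ≤ Ctilde v c a ^ (n + 2) / v ((n + 2 : ℕ) : K) := by
  rw [le_div_iff₀ (abv_natCast_pos v (by omega)), ← fixedRadius_pow, pow_succ' _ (n + 1)]
  exact mul_le_mul_of_nonneg_left
    (pow_le_pow_left₀ (fixedRadius_pos v).le (fixedRadius_le_Ctilde v c a) _) (Ctilde_nonneg v c a)

include hv

lemma abv_lt_abv_Pca {z : K} (hz : Ctilde v c a < v z) : v z < v (Pca c a z) := by
  have hz0 : 0 < v z := (Ctilde_pos v c a).trans hz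
  rw [abv_Pca_of_Ctilde_lt c a hv hz, lt_div_iff₀ (abv_natCast_pos v (by omega)),
    ← fixedRadius_pow, pow_succ' _ (n + 1)]
  have := (fixedRadius_le_Ctilde v c a).trans_lt hz
  have := fixedRadius_pos v (n := n)
  gcongr

lemma Ctilde_lt_abv_iterate {z : K} (hz : Ctilde v c a < v z) (k : ℕ) :
    Ctilde v c a < v ((Pca c a)^[k] z) := by
  induction k with
  | zero => exact hz
  | succ k ih =>
    rw [Function.iterate_succ_apply']
    exact ih.trans (abv_lt_abv_Pca hv c a ih)

lemma hca_Pca_sub_log_fixedRadius {z : K} (hz : Ctilde v c a < v z) :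
    hca v c a (Pca c a z) - Real.log (fixedRadius v n)
      = (n + 2) * (hca v c a z - Real.log (fixedRadius v n)) := by
  have hz0 : 0 < v z := (Ctilde_pos v c a).trans hz
  have hd : 0 < v ((n + 2 : ℕ) : K) := abv_natCast_pos v (by omega)
  rw [hca, hca, max_eq_right hz.le, max_eq_right (hz.trans (abv_lt_abv_Pca hv c a hz)).le,
    abv_Pca_of_Ctilde_lt c a hv hz, Real.log_div (by positivity) hd.ne', Real.log_pow,
    log_abv_natCast_eq]
  push_cast
  ring

lemma hca_iterate_sub_log_fixedRadius {z : K} (hz : Ctilde v c a < v z) (k : ℕ) :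
    hca v c a ((Pca c a)^[k] z) - Real.log (fixedRadius v n)
      = ((n : ℝ) + 2) ^ k * (hca v c a z - Real.log (fixedRadius v n)) := by
  induction k with
  | zero => simp
  | succ k ih =>
    rw [Function.iterate_succ_apply',
      hca_Pca_sub_log_fixedRadius hv c a (Ctilde_lt_abv_iterate hv c a hz k), ih, pow_succ]
    ring

lemma abs_hca_Pca_sub_le (z : K) :
    |hca v c a (Pca c a z) - (n + 2) * hca v c a z|
      ≤ (n + 1) * (|Real.log (Ctilde v c a)| + |Real.log (fixedRadius v n)|) := by
  have hD := Ctilde_pos v c a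
  have hd : 0 < v ((n + 2 : ℕ) : K) := abv_natCast_pos v (by omega)
  set L := Real.log (Ctilde v c a)
  set T := Real.log (fixedRadius v n)
  have hTL : (n + 1) * T ≤ (n + 1) * L := by
    gcongr
    exact Real.log_le_log (fixedRadius_pos v) (fixedRadius_le_Ctilde v c a)
  have hbounds : -((n + 1) * L) ≤ hca v c a (Pca c a z) - (n + 2) * hca v c a z ∧
      hca v c a (Pca c a z) - (n + 2) * hca v c a z ≤ -((n + 1) * T) := by
    rcases lt_or_ge (Ctilde v c a) (v z) with hz | hz
    · have := hca_Pca_sub_log_fixedRadius hv c a hz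
      constructor <;> linarith
    · have hhz : hca v c a z = L := by rw [hca, max_eq_left hz]
      have hlow : L ≤ hca v c a (Pca c a z) := Real.log_le_log hD (le_max_left _ _)
      have hup : hca v c a (Pca c a z) ≤ (n + 2) * L - (n + 1) * T := by
        calc hca v c a (Pca c a z)
            ≤ Real.log (Ctilde v c a ^ (n + 2) / v ((n + 2 : ℕ) : K)) :=
              Real.log_le_log (hD.trans_le (le_max_left _ _))
                (max_le (Ctilde_le_Ctilde_pow_div c a) (abv_Pca_le_of_abv_le_Ctilde c a hv hz))
          _ = (n + 2) * L - (n + 1) * T := by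
              rw [Real.log_div (by positivity) hd.ne', Real.log_pow, log_abv_natCast_eq]
              push_cast
              ring
      rw [hhz]
      constructor <;> linarith
  calc _ ≤ max |-((n + 1) * L)| |-((n + 1) * T)| := abs_le_max_abs_abs hbounds.1 hbounds.2
    _ ≤ (n + 1) * (|L| + |T|) := by
      rw [abs_neg, abs_neg, abs_mul, abs_mul, abs_of_pos (by positivity : (0 : ℝ) < n + 1),
        ← mul_max_of_nonneg _ _ (by positivity)]
      gcongr
      exact max_le_add_of_nonneg (abs_nonneg _) (abs_nonneg _)

end Dynamics

section GrowthRate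

variable {d A : ℝ} {x : ℕ → ℝ}

lemma dist_div_pow_succ_le (hd : 0 < d) (hx : ∀ m, |x (m + 1) - d * x m| ≤ A) (m : ℕ) :
    dist (x m / d ^ m) (x (m + 1) / d ^ (m + 1)) ≤ A / d * (1 / d) ^ m := by
  have h : x m / d ^ m - x (m + 1) / d ^ (m + 1) = -(x (m + 1) - d * x m) / d ^ (m + 1) := by
    field_simp
    ring
  rw [Real.dist_eq, h, abs_div, abs_neg, abs_of_pos (pow_pos hd _), div_pow, one_pow,
    div_mul_div_comm, mul_one, ← pow_succ']
  gcongr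
  exact hx m

lemma cauchySeq_div_pow (hd : 1 < d) (hx : ∀ m, |x (m + 1) - d * x m| ≤ A) :
    CauchySeq fun m => x m / d ^ m :=
  cauchySeq_of_le_geometric _ _ ((div_lt_one (by linarith)).2 hd)
    (dist_div_pow_succ_le (by linarith) hx)

lemma dist_div_pow_le_of_tendsto (hd : 1 < d) (hx : ∀ m, |x (m + 1) - d * x m| ≤ A) {L : ℝ}
    (hL : Tendsto (fun m => x m / d ^ m) atTop (𝓝 L)) (m : ℕ) :
    dist (x m / d ^ m) L ≤ A / ((d - 1) * d ^ m) := by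
  convert dist_le_of_le_geometric_of_tendsto _ _ ((div_lt_one (by linarith)).2 hd)
    (dist_div_pow_succ_le (by linarith) hx) hL m using 1
  have : d - 1 ≠ 0 := by linarith
  rw [one_div, inv_pow]
  field_simp

end GrowthRate

lemma tendsto_const_div_two_add_pow (n : ℕ) (b : ℝ) :
    Tendsto (fun m : ℕ => b / ((n : ℝ) + 2) ^ m) atTop (𝓝 0) :=
  tendsto_const_nhds.div_atTop
    (tendsto_pow_atTop_atTop_of_one_lt (by linarith [n.cast_nonneg (α := ℝ)]))

/-- The Green function `g_{c,a,v}`. The `limUnder` always exists (`tendsto_green`). -/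
def green (v : AbsoluteValue K ℝ) {n : ℕ} (c : Fin n → K) (a z : K) : ℝ :=
  limUnder atTop fun m : ℕ => hca v c a ((Pca c a)^[m] z) / ((n : ℝ) + 2) ^ m

section Green

variable [CharZero K] {v : AbsoluteValue K ℝ} (hv : IsNonarchimedean v) {n : ℕ} (c : Fin n → K)
  (a : K)
include hv

lemma abs_hca_iterate_succ_sub_le (z : K) (m : ℕ) :
    |hca v c a ((Pca c a)^[m + 1] z) - ((n : ℝ) + 2) * hca v c a ((Pca c a)^[m] z)|
      ≤ (n + 1) * (|Real.log (Ctilde v c a)| + |Real.log (fixedRadius v n)|) := by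
  rw [Function.iterate_succ_apply']
  exact abs_hca_Pca_sub_le hv c a _

lemma tendsto_green (z : K) :
    Tendsto (fun m : ℕ => hca v c a ((Pca c a)^[m] z) / ((n : ℝ) + 2) ^ m) atTop
      (𝓝 (green v c a z)) :=
  (cauchySeq_div_pow (by linarith [n.cast_nonneg (α := ℝ)])
    (abs_hca_iterate_succ_sub_le hv c a z)).tendsto_limUnder

lemma dist_green_le (z : K) (m : ℕ) :
    dist (hca v c a ((Pca c a)^[m] z) / ((n : ℝ) + 2) ^ m) (green v c a z)
      ≤ (|Real.log (Ctilde v c a)| + |Real.log (fixedRadius v n)|) / ((n : ℝ) + 2) ^ m := by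
  convert dist_div_pow_le_of_tendsto (by linarith [n.cast_nonneg (α := ℝ)])
    (abs_hca_iterate_succ_sub_le hv c a z) (tendsto_green hv c a z) m using 1
  rw [show (n : ℝ) + 2 - 1 = n + 1 by ring, mul_div_mul_left _ _ (by positivity)]

lemma green_nonneg (z : K) : 0 ≤ green v c a z := by
  refine le_of_tendsto_of_tendsto' (tendsto_const_div_two_add_pow n (Real.log (Ctilde v c a)))
    (tendsto_green hv c a z) fun m => ?_
  gcongr
  exact Real.log_le_log (Ctilde_pos v c a) (le_max_left _ _)

lemma green_Pca (z : K) : green v c a (Pca c a z) = (n + 2) * green v c a z := by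
  refine Tendsto.limUnder_eq <|
    (((tendsto_green hv c a z).comp (tendsto_add_atTop_nat 1)).const_mul ((n : ℝ) + 2)).congr
      fun m => ?_
  rw [Function.comp_apply, Function.iterate_succ_apply, pow_succ]
  field_simp

lemma green_iterate (z : K) (m : ℕ) :
    green v c a ((Pca c a)^[m] z) = ((n : ℝ) + 2) ^ m * green v c a z := by
  induction m with
  | zero => simp
  | succ m ih => rw [Function.iterate_succ_apply', green_Pca hv, ih, pow_succ]; ring

lemma green_of_Ctilde_lt {z : K} (hz : Ctilde v c a < v z) :
    green v c a z = hca v c a z - Real.log (fixedRadius v n) := by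
  have hlim := (tendsto_const_div_two_add_pow n (Real.log (fixedRadius v n))).add_const
    (hca v c a z - Real.log (fixedRadius v n))
  rw [zero_add] at hlim
  refine Tendsto.limUnder_eq <| hlim.congr fun m => ?_
  have := hca_iterate_sub_log_fixedRadius hv c a hz m
  field_simp
  linarith

lemma green_pos_of_Ctilde_lt {z : K} (hz : Ctilde v c a < v z) : 0 < green v c a z := by
  rw [green_of_Ctilde_lt hv c a hz, sub_pos, hca, max_eq_right hz.le]
  exact Real.log_lt_log (fixedRadius_pos v) ((fixedRadius_le_Ctilde v c a).trans_lt hz)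

lemma green_eq_zero_iff (z : K) :
    green v c a z = 0 ↔ ∃ B : ℝ, ∀ m : ℕ, v ((Pca c a)^[m] z) ≤ B := by
  constructor
  · intro h0
    by_contra! hunbdd
    obtain ⟨m, hm⟩ := hunbdd (Ctilde v c a)
    have := green_pos_of_Ctilde_lt hv c a hm
    rw [green_iterate hv, h0, mul_zero] at this
    exact this.false
  · rintro ⟨B, hB⟩
    have hD := Ctilde_pos v c a
    refine tendsto_nhds_unique (tendsto_green hv c a z) <|
      tendsto_of_tendsto_of_tendsto_of_le_of_le
        (tendsto_const_div_two_add_pow n (Real.log (Ctilde v c a)))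
        (tendsto_const_div_two_add_pow n (Real.log (max (Ctilde v c a) B))) (fun m => ?_)
        fun m => ?_
    · gcongr
      exact Real.log_le_log hD (le_max_left _ _)
    · gcongr
      exact Real.log_le_log (hD.trans_le (le_max_left _ _)) (max_le_max le_rfl (hB m))

end Green

lemma inv_abv_natCast_le_alphaV {v : AbsoluteValue K ℝ} {d j : ℕ} (hj : j ∈ Finset.Icc 1 d) :
    (v (j : K))⁻¹ ≤ alphaV v d :=
  (Finset.le_fold_max _).2 (Or.inr ⟨j, hj, le_rfl⟩)

lemma one_le_alphaV {v : AbsoluteValue K ℝ} {d : ℕ} (hd : 1 ≤ d) : 1 ≤ alphaV v d := by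
  simpa using inv_abv_natCast_le_alphaV (v := v) (Finset.mem_Icc.2 ⟨le_rfl, hd⟩)

section UniformBound

variable [CharZero K] {v : AbsoluteValue K ℝ} (hv : IsNonarchimedean v) {n : ℕ}
  (c : Fin n → K) (a : K)

include hv

lemma Ctilde_le_of_max_le {C : ℝ} (h : max (v a) (cnorm v c) ≤ C) :
    Ctilde v c a ≤ max 1 (C * alphaV v (n + 2)) := by
  have hα : 1 ≤ alphaV v (n + 2) := one_le_alphaV (by omega)
  have hC : 0 ≤ C := (v.nonneg a).trans ((le_max_left _ _).trans h)
  have hCM : C ≤ max 1 (C * alphaV v (n + 2)) :=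
    (le_mul_of_one_le_right hC hα).trans (le_max_right _ _)
  have hva : v a ≤ C := (le_max_left _ _).trans h
  have hcn : cnorm v c ≤ C := (le_max_right _ _).trans h
  have hd1 : v ((n + 2 : ℕ) : K) ≤ 1 := hv.apply_natCast_le_one
  have hd0 : 0 < v ((n + 2 : ℕ) : K) := abv_natCast_pos v (by omega)
  refine max_le (hva.trans hCM) (max_le (hcn.trans hCM) (max_le ?_ (max_le ?_ ?_)))
  · exact (Real.rpow_le_one hd0.le hd1 (by positivity)).trans (le_max_left _ _)
  · exact (mul_le_of_le_one_left (v.nonneg a) (Real.rpow_le_one hd0.le hd1 (by positivity))).trans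
      (hva.trans hCM)
  refine (Finset.fold_max_le _).2 ⟨zero_le_one.trans (le_max_left _ _), fun j hj => ?_⟩
  have hk : n + 2 - j ≠ 0 := by grind
  have hdiv : v (((n + 2 : ℕ) : K) / (j : K)) ≤ alphaV v (n + 2) := by
    rw [map_div₀, div_eq_mul_inv]
    exact (mul_le_of_le_one_left (by positivity) hd1).trans
      (inv_abv_natCast_le_alphaV (by grind))
  refine (Real.rpow_one_div_le_of_le_pow (by positivity) (by positivity) hk ?_).trans
    (le_max_right _ _)
  calc v (esymmK c (n + 2 - j)) * v (((n + 2 : ℕ) : K) / (j : K))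
      ≤ C ^ (n + 2 - j) * alphaV v (n + 2) :=
        mul_le_mul ((abv_esymmK_le hv c _).trans (pow_le_pow_left₀ (cnorm_nonneg v c) hcn _))
          hdiv (v.nonneg _) (by positivity)
    _ ≤ C ^ (n + 2 - j) * alphaV v (n + 2) ^ (n + 2 - j) := by gcongr; exact le_self_pow₀ hα hk
    _ = (C * alphaV v (n + 2)) ^ (n + 2 - j) := (mul_pow _ _ _).symm

lemma abs_log_Ctilde_le {C : ℝ} (h : max (v a) (cnorm v c) ≤ C) :
    |Real.log (Ctilde v c a)|
      ≤ max |Real.log (fixedRadius v n)| |Real.log (max 1 (C * alphaV v (n + 2)))| :=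
  abs_le_max_abs_abs (Real.log_le_log (fixedRadius_pos v) (fixedRadius_le_Ctilde v c a))
    (Real.log_le_log (Ctilde_pos v c a) (Ctilde_le_of_max_le hv c a h))

lemma tendstoUniformlyOn_green (C : ℝ) :
    TendstoUniformlyOn
      (fun (m : ℕ) (p : K × (Fin n → K) × K) =>
        hca v p.2.1 p.2.2 ((Pca p.2.1 p.2.2)^[m] p.1) / ((n : ℝ) + 2) ^ m)
      (fun p => green v p.2.1 p.2.2 p.1) atTop
      {p : K × (Fin n → K) × K | max (v p.2.2) (cnorm v p.2.1) ≤ C} := by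
  rw [Metric.tendstoUniformlyOn_iff]
  intro ε hε
  filter_upwards [(tendsto_const_div_two_add_pow n (max |Real.log (fixedRadius v n)|
      |Real.log (max 1 (C * alphaV v (n + 2)))| + |Real.log (fixedRadius v n)|)).eventually
      (gt_mem_nhds hε)] with m hm p hp
  rw [dist_comm]
  refine (dist_green_le hv _ _ _ m).trans_lt (lt_of_le_of_lt ?_ hm)
  gcongr
  exact abs_log_Ctilde_le hv _ _ hp

end UniformBound

lemma Continuous.finset_fold_max {X ι : Type*} [TopologicalSpace X] (s : Finset ι) (b : ℝ)
    {f : ι → X → ℝ} (hf : ∀ i ∈ s, Continuous (f i)) :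
    Continuous fun x => s.fold max b fun i => f i x := by
  classical
  induction s using Finset.induction with
  | empty => exact continuous_const
  | insert i s hi ih =>
    simp only [Finset.fold_insert hi]
    exact (hf i (Finset.mem_insert_self _ _)).max
      (ih fun j hj => hf j (Finset.mem_insert_of_mem hj))

section Continuity

variable [TopologicalSpace K] {v : AbsoluteValue K ℝ} {n : ℕ}

lemma continuous_cnorm (hvc : Continuous v) : Continuous fun c : Fin n → K => cnorm v c :=
  Continuous.finset_fold_max _ _ fun i _ => hvc.comp (continuous_apply i)

variable [IsTopologicalRing K]

@[fun_prop]
lemma continuous_esymmK (k : ℕ) : Continuous fun c : Fin n → K => esymmK c k := by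
  unfold esymmK
  fun_prop

lemma continuous_Pca : Continuous fun p : K × (Fin n → K) × K => Pca p.2.1 p.2.2 p.1 := by
  unfold Pca
  fun_prop

lemma continuous_Pca_iterate (m : ℕ) :
    Continuous fun p : K × (Fin n → K) × K => (Pca p.2.1 p.2.2)^[m] p.1 := by
  induction m with
  | zero => exact continuous_fst
  | succ m ih =>
    simp only [Function.iterate_succ_apply']
    exact continuous_Pca.comp (ih.prodMk continuous_snd)

variable (hvc : Continuous v)
include hvc

lemma continuous_Ctilde : Continuous fun p : (Fin n → K) × K => Ctilde v p.1 p.2 := by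
  refine (hvc.comp continuous_snd).max (((continuous_cnorm hvc).comp continuous_fst).max
    (continuous_const.max (((hvc.comp continuous_snd).const_mul _).max
      (Continuous.finset_fold_max _ _ fun j _ => ?_))))
  exact (Real.continuous_rpow_const (by positivity)).comp
    ((hvc.comp ((continuous_esymmK _).comp continuous_fst)).mul continuous_const)

lemma continuous_hca_iterate [CharZero K] (m : ℕ) :
    Continuous fun p : K × (Fin n → K) × K => hca v p.2.1 p.2.2 ((Pca p.2.1 p.2.2)^[m] p.1) :=
  (((continuous_Ctilde hvc).comp continuous_snd).max
    (hvc.comp (continuous_Pca_iterate m))).log fun _ =>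
      ((Ctilde_pos v _ _).trans_le (le_max_left _ _)).ne'

lemma continuous_green [CharZero K] (hv : IsNonarchimedean v) :
    Continuous fun p : K × (Fin n → K) × K => green v p.2.1 p.2.2 p.1 := by
  refine continuous_iff_continuousAt.2 fun p => ?_
  set C := max (v p.2.2) (cnorm v p.2.1) + 1
  have hopen : IsOpen {q : K × (Fin n → K) × K | max (v q.2.2) (cnorm v q.2.1) < C} :=
    isOpen_lt ((hvc.comp (continuous_snd.comp continuous_snd)).max
      ((continuous_cnorm hvc).comp (continuous_fst.comp continuous_snd))) continuous_const
  have hnhds : {q : K × (Fin n → K) × K | max (v q.2.2) (cnorm v q.2.1) ≤ C} ∈ 𝓝 p :=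
    mem_of_superset (hopen.mem_nhds (lt_add_one (max (v p.2.2) (cnorm v p.2.1))))
      (Set.ofPred_subset_ofPred.2 fun _ => le_of_lt)
  exact ((tendstoUniformlyOn_green hv C).continuousOn (Frequently.of_forall fun m =>
    ((continuous_hca_iterate hvc m).div_const _).continuousOn)).continuousAt hnhds

end Continuity

theorem statement4_general {K : Type*} [Field K] [CharZero K]
    (v : AbsoluteValue K ℝ) (hv : ∀ x y : K, v (x + y) ≤ max (v x) (v y)) (n : ℕ) :
    ∃ g : (Fin n → K) → K → K → ℝ,
      -- `g` is the pointwise limit `g_{c,a,v}(z) = lim_m d^{-m} h_{c,a,v}(P_{c,a}^m(z))`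
      (∀ (c : Fin n → K) (a z : K),
        Tendsto (fun m : ℕ => hca v c a ((Pca c a)^[m] z) / ((n : ℝ) + 2) ^ m)
          atTop (nhds (g c a z))) ∧
      -- uniform convergence on `{(z,c,a) : max{|a|_v, |c|_v} ≤ C}` for every `C > 0`
      (∀ C : ℝ, 0 < C →
        TendstoUniformlyOn
          (fun (m : ℕ) (p : K × (Fin n → K) × K) =>
            hca v p.2.1 p.2.2 ((Pca p.2.1 p.2.2)^[m] p.1) / ((n : ℝ) + 2) ^ m)
          (fun p => g p.2.1 p.2.2 p.1) atTop
          {p : K × (Fin n → K) × K | max (v p.2.2) (cnorm v p.2.1) ≤ C}) ∧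
      -- `g` is non-negative
      (∀ (c : Fin n → K) (a z : K), 0 ≤ g c a z) ∧
      -- `g` is continuous on `K^d` for the topology induced by `|·|_v`
      (∀ (c : Fin n → K) (a z : K) (ε : ℝ), 0 < ε → ∃ δ : ℝ, 0 < δ ∧
        ∀ (c' : Fin n → K) (a' z' : K),
          (∀ i, v (c' i - c i) < δ) → v (a' - a) < δ → v (z' - z) < δ →
            |g c' a' z' - g c a z| < ε) ∧
      -- the functional equation `g_{c,a,v} ∘ P_{c,a} = d · g_{c,a,v}`
      (∀ (c : Fin n → K) (a z : K), g c a (Pca c a z) = ((n : ℝ) + 2) * g c a z) ∧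
      -- `g = 0` exactly on points with bounded forward orbit
      (∀ (c : Fin n → K) (a z : K),
        g c a z = 0 ↔ ∃ B : ℝ, ∀ m : ℕ, v ((Pca c a)^[m] z) ≤ B) := by
  refine ⟨green v, tendsto_green hv, fun C _ => tendstoUniformlyOn_green hv C, green_nonneg hv,
    fun c a z ε hε => ?_, green_Pca hv, green_eq_zero_iff hv⟩
  let _ : NormedField K := v.toNormedField
  obtain ⟨δ, hδ, hball⟩ := Metric.continuousAt_iff.1
    ((continuous_green (n := n) continuous_norm hv).continuousAt (x := (z, c, a))) ε hε
  refine ⟨δ, hδ, fun c' a' z' hc ha hz => ?_⟩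
  have hdist : dist (z', c', a') (z, c, a) < δ := by
    simp only [Prod.dist_eq, max_lt_iff, dist_pi_lt_iff hδ]
    simp only [dist_eq_norm]
    exact ⟨hz, hc, ha⟩
  simpa [Real.dist_eq] using hball hdist

/-- the functions `(z,c,a) ↦ d^{-m}·h_{c,a,v}(P_{c,a}^m(z))` converge, uniformly
on each set `{(z,c,a) : max{|a|_v,|c|_v} ≤ C}`, to a limit `g_{c,a,v}(z)` which is a continuous
non-negative function on `K^d`, satisfies `g_{c,a,v}(P_{c,a}(z)) = d·g_{c,a,v}(z)`, and vanishes
exactly at the points with bounded forward orbit. Here `d = n + 2`. -/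
theorem statement4 {K : Type*} [Field K] [IsAlgClosed K] [CharZero K]
    (v : AbsoluteValue K ℝ) (hv : ∀ x y : K, v (x + y) ≤ max (v x) (v y)) (n : ℕ) :
    ∃ g : (Fin n → K) → K → K → ℝ,
      -- `g` is the pointwise limit `g_{c,a,v}(z) = lim_m d^{-m} h_{c,a,v}(P_{c,a}^m(z))`
      (∀ (c : Fin n → K) (a z : K),
        Tendsto (fun m : ℕ => hca v c a ((Pca c a)^[m] z) / ((n : ℝ) + 2) ^ m)
          atTop (nhds (g c a z))) ∧
      -- uniform convergence on `{(z,c,a) : max{|a|_v, |c|_v} ≤ C}` for every `C > 0`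
      (∀ C : ℝ, 0 < C →
        TendstoUniformlyOn
          (fun (m : ℕ) (p : K × (Fin n → K) × K) =>
            hca v p.2.1 p.2.2 ((Pca p.2.1 p.2.2)^[m] p.1) / ((n : ℝ) + 2) ^ m)
          (fun p => g p.2.1 p.2.2 p.1) atTop
          {p : K × (Fin n → K) × K | max (v p.2.2) (cnorm v p.2.1) ≤ C}) ∧
      -- `g` is non-negative
      (∀ (c : Fin n → K) (a z : K), 0 ≤ g c a z) ∧
      -- `g` is continuous on `K^d` for the topology induced by `|·|_v`
      (∀ (c : Fin n → K) (a z : K) (ε : ℝ), 0 < ε → ∃ δ : ℝ, 0 < δ ∧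
        ∀ (c' : Fin n → K) (a' z' : K),
          (∀ i, v (c' i - c i) < δ) → v (a' - a) < δ → v (z' - z) < δ →
            |g c' a' z' - g c a z| < ε) ∧
      -- the functional equation `g_{c,a,v} ∘ P_{c,a} = d · g_{c,a,v}`
      (∀ (c : Fin n → K) (a z : K), g c a (Pca c a z) = ((n : ℝ) + 2) * g c a z) ∧
      -- `g = 0` exactly on points with bounded forward orbit
      (∀ (c : Fin n → K) (a z : K),
        g c a z = 0 ↔ ∃ B : ℝ, ∀ m : ℕ, v ((Pca c a)^[m] z) ≤ B) :=
  statement4_general v hv n
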